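/- Let β ∈ (0,1) be irrational and let n ≥ 1 be such that p_{n−1}/q_{n−1} < β < p_n/q_n, where p_k/q_k are the convergents of β. Let z_n be the point on the geodesic semicircle in the upper half-plane with endpoints p_{n−1}/q_{n−1} and p_n/q_n whose real part equals β, so that Im z_n = sqrt( (β − p_{n−1}/q_{n−1}) · (p_n/q_n − β) ). Then 1/(2 q_n q_{n+1}) < Im z_n < 1/(2 q_{n−1} q_n). -/

import Mathlib

/-!
With `t_m = T₀^m(β)` one has `β = (p_m + p_{m-1} t_m) / (q_m + q_{m-1} t_m)`, which together with
`p_m q_{m-1} - p_{m-1} q_m = ±1` gives `|β - p_{m-1}/q_{m-1}| = 1 / (q_{m-1} (q_m + q_{m-1} t_m))`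
and `|p_m/q_m - p_{m-1}/q_{m-1}| = 1 / (q_{m-1} q_m)`. As `β` lies between the two convergents,
`a = β - p_{n-1}/q_{n-1}` and `b = p_n/q_n - β` are positive with `a + b = 1/(q_{n-1} q_n)`, and
`a ≠ b` by irrationality, so AM–GM gives the upper bound. For the lower bound, `k_{m+1} ≥ 1 > t_m`
gives `q_m + q_{m-1} t_m ≤ q_{m+1}`, hence `1/a ≤ q_n q_{n+1}` and `1/b ≤ 2 q_n q_{n+1}`.
-/

noncomputable section

/-- The Gauss map `x ↦ 1/x - ⌊1/x⌋`. -/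
def gaussMap (x : ℝ) : ℝ := 1/x - ⌊(1/x : ℝ)⌋

/-- The continued fraction digit `k_n(α)` for `n ≥ 1`. -/
def cfK (α : ℝ) (n : ℕ) : ℤ := ⌊(1 / (gaussMap^[n-1] α) : ℝ)⌋

/-- `cfP α n = p_{n-1}(α)`: numerators of convergents, `p_{-1} = 1, p_0 = 0`. -/
def cfP (α : ℝ) : ℕ → ℤ
  | 0 => 1
  | 1 => 0
  | n+2 => cfK α (n+1) * cfP α (n+1) + cfP α n

/-- `cfQ α n = q_{n-1}(α)`: denominators of convergents, `q_{-1} = 0, q_0 = 1`. -/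
def cfQ (α : ℝ) : ℕ → ℤ
  | 0 => 0
  | 1 => 1
  | n+2 => cfK α (n+1) * cfQ α (n+1) + cfQ α n

open Set

lemma irrational_gaussMap {x : ℝ} (hx : Irrational x) : Irrational (gaussMap x) := by
  unfold gaussMap
  rw [one_div]
  exact hx.inv.sub_intCast _

lemma gaussMap_mem_Ioo {x : ℝ} (hx : Irrational x) : gaussMap x ∈ Ioo (0 : ℝ) 1 :=
  ⟨(Int.fract_nonneg _).lt_of_ne (irrational_gaussMap hx).ne_zero.symm, Int.fract_lt_one _⟩

lemma irrational_gaussMap_iterate {β : ℝ} (hirr : Irrational β) (m : ℕ) :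
    Irrational (gaussMap^[m] β) := by
  induction m with
  | zero => exact hirr
  | succ m ih => rw [Function.iterate_succ_apply']; exact irrational_gaussMap ih

lemma gaussMap_iterate_succ (β : ℝ) (m : ℕ) :
    gaussMap^[m + 1] β = 1 / gaussMap^[m] β - cfK β (m + 1) := by
  rw [Function.iterate_succ_apply']
  rfl

lemma cfP_succ_succ (β : ℝ) (m : ℕ) : cfP β (m + 2) = cfK β (m + 1) * cfP β (m + 1) + cfP β m :=
  rfl

lemma cfQ_succ_succ (β : ℝ) (m : ℕ) : cfQ β (m + 2) = cfK β (m + 1) * cfQ β (m + 1) + cfQ β m :=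
  rfl

lemma cfP_mul_cfQ_sub_cfP_mul_cfQ (β : ℝ) (m : ℕ) :
    cfP β (m + 1) * cfQ β m - cfP β m * cfQ β (m + 1) = (-1) ^ (m + 1) := by
  induction m with
  | zero => rfl
  | succ m ih =>
    rw [cfP_succ_succ, cfQ_succ_succ, pow_succ]
    linear_combination (-1 : ℤ) * ih

lemma mul_cfQ_add_eq_cfP_add {β : ℝ} (hirr : Irrational β) (m : ℕ) :
    β * (cfQ β (m + 1) + cfQ β m * gaussMap^[m] β) = cfP β (m + 1) + cfP β m * gaussMap^[m] β := by
  induction m with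
  | zero => simp [cfP, cfQ]
  | succ m ih =>
    have ht : gaussMap^[m] β ≠ 0 := (irrational_gaussMap_iterate hirr m).ne_zero
    rw [gaussMap_iterate_succ, cfP_succ_succ, cfQ_succ_succ]
    push_cast
    field_simp
    linear_combination ih

section PositiveIrrational

variable {β : ℝ}

lemma gaussMap_iterate_mem_Ioo (hβ : β ∈ Ioo (0 : ℝ) 1) (hirr : Irrational β) (m : ℕ) :
    gaussMap^[m] β ∈ Ioo (0 : ℝ) 1 := by
  cases m with
  | zero => exact hβ
  | succ m =>
    rw [Function.iterate_succ_apply']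
    exact gaussMap_mem_Ioo (irrational_gaussMap_iterate hirr m)

lemma one_le_cfK (hβ : β ∈ Ioo (0 : ℝ) 1) (hirr : Irrational β) (m : ℕ) : 1 ≤ cfK β (m + 1) := by
  obtain ⟨h0, h1⟩ := gaussMap_iterate_mem_Ioo hβ hirr m
  exact Int.le_floor.mpr (by exact_mod_cast one_le_one_div h0 h1.le)

lemma cfQ_nonneg (hβ : β ∈ Ioo (0 : ℝ) 1) (hirr : Irrational β) (m : ℕ) : 0 ≤ cfQ β m := by
  induction m using Nat.twoStepInduction with
  | zero => rfl
  | one => exact zero_le_one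
  | more m ih₀ ih₁ =>
    rw [cfQ_succ_succ]
    have := one_le_cfK hβ hirr m
    positivity

lemma cfQ_le_cfQ_succ (hβ : β ∈ Ioo (0 : ℝ) 1) (hirr : Irrational β) (m : ℕ) :
    cfQ β m ≤ cfQ β (m + 1) := by
  cases m with
  | zero => exact zero_le_one
  | succ m =>
    rw [cfQ_succ_succ]
    nlinarith [one_le_cfK hβ hirr m, cfQ_nonneg hβ hirr m, cfQ_nonneg hβ hirr (m + 1)]

lemma cfQ_pos (hβ : β ∈ Ioo (0 : ℝ) 1) (hirr : Irrational β) {m : ℕ} (hm : 1 ≤ m) :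
    0 < cfQ β m := by
  induction m, hm using Nat.le_induction with
  | base => exact zero_lt_one
  | succ m _ ih => exact ih.trans_le (cfQ_le_cfQ_succ hβ hirr m)

lemma cfQ_succ_add_mul_gaussMap_iterate_le (hβ : β ∈ Ioo (0 : ℝ) 1) (hirr : Irrational β)
    (m : ℕ) : (cfQ β (m + 1) : ℝ) + cfQ β m * gaussMap^[m] β ≤ cfQ β (m + 2) := by
  have hk : (1 : ℝ) ≤ cfK β (m + 1) := by exact_mod_cast one_le_cfK hβ hirr m
  have hq₀ : (0 : ℝ) ≤ cfQ β m := by exact_mod_cast cfQ_nonneg hβ hirr m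
  have hq₁ : (0 : ℝ) ≤ cfQ β (m + 1) := by exact_mod_cast cfQ_nonneg hβ hirr (m + 1)
  have ht := (gaussMap_iterate_mem_Ioo hβ hirr m).2.le
  rw [cfQ_succ_succ]
  push_cast
  nlinarith

lemma abs_sub_cfP_div_cfQ (hβ : β ∈ Ioo (0 : ℝ) 1) (hirr : Irrational β) {m : ℕ} (hm : 1 ≤ m) :
    |β - cfP β m / cfQ β m| = 1 / (cfQ β m * (cfQ β (m + 1) + cfQ β m * gaussMap^[m] β)) := by
  have hq₀ : (0 : ℝ) < cfQ β m := by exact_mod_cast cfQ_pos hβ hirr hm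
  have hq₁ : (0 : ℝ) < cfQ β (m + 1) := by exact_mod_cast cfQ_pos hβ hirr (by omega : 1 ≤ m + 1)
  have ht := (gaussMap_iterate_mem_Ioo hβ hirr m).1
  have hdet : (cfP β (m + 1) * cfQ β m - cfP β m * cfQ β (m + 1) : ℝ) = (-1) ^ (m + 1) := by
    exact_mod_cast cfP_mul_cfQ_sub_cfP_mul_cfQ β m
  have hsub : β - cfP β m / cfQ β m =
      (-1) ^ (m + 1) / (cfQ β m * (cfQ β (m + 1) + cfQ β m * gaussMap^[m] β)) := by
    field_simp
    linear_combination (cfQ β m : ℝ) * mul_cfQ_add_eq_cfP_add hirr m + hdet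
  rw [hsub, abs_div, abs_pow, abs_neg, abs_one, one_pow, abs_of_pos (by positivity)]

lemma abs_cfP_div_cfQ_sub_cfP_div_cfQ (hβ : β ∈ Ioo (0 : ℝ) 1) (hirr : Irrational β) {m : ℕ}
    (hm : 1 ≤ m) :
    |(cfP β (m + 1) / cfQ β (m + 1) : ℝ) - cfP β m / cfQ β m| = 1 / (cfQ β m * cfQ β (m + 1)) := by
  have hq₀ : (0 : ℝ) < cfQ β m := by exact_mod_cast cfQ_pos hβ hirr hm
  have hq₁ : (0 : ℝ) < cfQ β (m + 1) := by exact_mod_cast cfQ_pos hβ hirr (by omega : 1 ≤ m + 1)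
  have hdet : (cfP β (m + 1) * cfQ β m - cfP β m * cfQ β (m + 1) : ℝ) = (-1) ^ (m + 1) := by
    exact_mod_cast cfP_mul_cfQ_sub_cfP_mul_cfQ β m
  rw [div_sub_div _ _ hq₁.ne' hq₀.ne', mul_comm (cfQ β (m + 1) : ℝ) (cfP β m), hdet, abs_div,
    abs_pow, abs_neg, abs_one, one_pow, abs_of_pos (by positivity), mul_comm (cfQ β (m + 1) : ℝ)]

end PositiveIrrational

lemma Real.sqrt_mul_lt_add_div_two {a b : ℝ} (hab : 0 < a + b) (hne : a ≠ b) :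
    √(a * b) < (a + b) / 2 := by
  rw [Real.sqrt_lt' (by linarith)]
  nlinarith [sq_pos_of_ne_zero (sub_ne_zero.2 hne)]

lemma one_div_two_mul_lt_sqrt_one_div_mul_one_div {x y c : ℝ} (hx : 0 < x) (hy : 0 < y)
    (hxc : x ≤ c) (hyc : y ≤ 2 * c) : 1 / (2 * c) < √(1 / x * (1 / y)) := by
  have hc : 0 < c := hx.trans_le hxc
  rw [Real.lt_sqrt (by positivity), one_div_mul_one_div, div_pow, one_pow]
  apply one_div_lt_one_div_of_lt (by positivity)
  nlinarith [mul_le_mul hxc hyc hy.le hc.le]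

/-- If `p_{n−1}/q_{n−1} < β < p_n/q_n`, the point `z_n` on the geodesic with endpoints
`p_{n−1}/q_{n−1}` and `p_n/q_n` lying above `β` has
`1/(2 q_n q_{n+1}) < Im z_n < 1/(2 q_{n−1} q_n)`. -/
theorem geodesic_height_bounds (β : ℝ) (hβ : β ∈ Set.Ioo (0:ℝ) 1) (hirr : Irrational β)
    (n : ℕ) (hn : 1 ≤ n)
    (hlt : ((cfP β n : ℝ) / (cfQ β n : ℝ)) < β ∧ β < ((cfP β (n+1) : ℝ) / (cfQ β (n+1) : ℝ))) :
    1 / (2 * (cfQ β (n+1) : ℝ) * (cfQ β (n+2) : ℝ))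
        < Real.sqrt ((β - (cfP β n : ℝ) / (cfQ β n : ℝ)) *
            ((cfP β (n+1) : ℝ) / (cfQ β (n+1) : ℝ) - β)) ∧
      Real.sqrt ((β - (cfP β n : ℝ) / (cfQ β n : ℝ)) *
            ((cfP β (n+1) : ℝ) / (cfQ β (n+1) : ℝ) - β))
        < 1 / (2 * (cfQ β n : ℝ) * (cfQ β (n+1) : ℝ)) := by
  obtain ⟨hleft, hright⟩ := hlt
  have hq₀ : (0 : ℝ) < cfQ β n := by exact_mod_cast cfQ_pos hβ hirr hn
  have hq₁ : (0 : ℝ) < cfQ β (n + 1) := by exact_mod_cast cfQ_pos hβ hirr (by omega : 1 ≤ n + 1)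
  have hq₀₁ : (cfQ β n : ℝ) ≤ cfQ β (n + 1) := by exact_mod_cast cfQ_le_cfQ_succ hβ hirr n
  have hq₁₂ : (cfQ β (n + 1) : ℝ) ≤ cfQ β (n + 2) := by exact_mod_cast cfQ_le_cfQ_succ hβ hirr _
  obtain ⟨hu₀, -⟩ := gaussMap_iterate_mem_Ioo hβ hirr n
  obtain ⟨hv₀, hv₁⟩ := gaussMap_iterate_mem_Ioo hβ hirr (n + 1)
  set a := β - (cfP β n : ℝ) / cfQ β n
  set b := (cfP β (n + 1) : ℝ) / cfQ β (n + 1) - β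
  have ha : a = 1 / (cfQ β n * (cfQ β (n + 1) + cfQ β n * gaussMap^[n] β)) := by
    rw [← abs_sub_cfP_div_cfQ hβ hirr hn, abs_of_pos (sub_pos.2 hleft)]
  have hb : b = 1 / (cfQ β (n + 1) * (cfQ β (n + 2) + cfQ β (n + 1) * gaussMap^[n + 1] β)) := by
    rw [← abs_sub_cfP_div_cfQ hβ hirr (by omega), abs_sub_comm, abs_of_pos (sub_pos.2 hright)]
  have hsum : a + b = 1 / (cfQ β n * cfQ β (n + 1)) := by
    rw [← abs_cfP_div_cfQ_sub_cfP_div_cfQ hβ hirr hn, abs_of_pos (by linarith)]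
    ring
  -- `a = b` would make `β` the midpoint of two rationals.
  have hne : a ≠ b := fun h ↦ hirr ⟨((cfP β n / cfQ β n + cfP β (n + 1) / cfQ β (n + 1)) / 2 : ℚ),
    by push_cast; linarith⟩
  constructor
  · have hA : 0 < (cfQ β (n + 1) : ℝ) + cfQ β n * gaussMap^[n] β := by
      linarith [mul_pos hq₀ hu₀]
    rw [ha, hb, mul_assoc]
    apply one_div_two_mul_lt_sqrt_one_div_mul_one_div (mul_pos hq₀ hA)
      (mul_pos hq₁ (by linarith [mul_pos hq₁ hv₀]))
    · exact mul_le_mul hq₀₁ (cfQ_succ_add_mul_gaussMap_iterate_le hβ hirr n) hA.le hq₁.le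
    · nlinarith [mul_le_mul_of_nonneg_left hv₁.le (mul_pos hq₁ hq₁).le,
        mul_le_mul_of_nonneg_left hq₁₂ hq₁.le]
  · calc √(a * b) < (a + b) / 2 := Real.sqrt_mul_lt_add_div_two (by linarith) hne
      _ = _ := by rw [hsum]; ring
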